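/- Let p, q ≥ 3 and let G be the complete bipartite graph on the disjoint union of finite sets A and B with |A| = p and |B| = q (every a ∈ A adjacent to every b ∈ B, no other adjacencies). Then for every a ∈ A and b ∈ B, ‖P χ_(a,b)‖² = 2(p−1)(q−1)/(pq). Moreover, for a, a' ∈ A and b, b' ∈ B with (a,b) ≠ (a',b'), the normalized inner product ⟨P χ_(a,b), P χ_(a',b')⟩ / (‖P χ_(a,b)‖·‖P χ_(a',b')‖) equals: −1/(q−1) if a = a' and b ≠ b'; −1/(p−1) if b = b' and a ≠ a'; and 1/((p−1)(q−1)) if a ≠ a' and b ≠ b'. -/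

import Mathlib

open scoped BigOperators RealInnerProductSpace

noncomputable section

variable {V : Type*} [Fintype V] [DecidableEq V]

/-- The indicator chain `χ_(a,b)`: 1 at `(a,b)`, −1 at `(b,a)`, 0 elsewhere. -/
def edgeChi (a b : V) : EuclideanSpace ℝ (V × V) :=
  WithLp.toLp 2 (fun p : V × V => (if p = (a, b) then 1 else if p = (b, a) then -1 else 0 : ℝ))

/-- The cycle space `H` of a simple graph `G`: the kernel of the boundary map
restricted to the edge space `C₁`. -/
def cycleSpace (G : SimpleGraph V) : Submodule ℝ (EuclideanSpace ℝ (V × V)) where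
  carrier := { f | (∀ u v : V, f (u, v) = - f (v, u)) ∧
               (∀ u v : V, ¬ G.Adj u v → f (u, v) = 0) ∧
               (∀ v : V, ∑ u : V, f (u, v) = 0) }
  add_mem' := by
    rintro f g ⟨hf1, hf2, hf3⟩ ⟨hg1, hg2, hg3⟩
    refine ⟨fun u v => ?_, fun u v h => ?_, fun v => ?_⟩
    · show f (u, v) + g (u, v) = -(f (v, u) + g (v, u))
      rw [hf1 u v, hg1 u v]; ring
    · show f (u, v) + g (u, v) = 0
      rw [hf2 u v h, hg2 u v h]; ring
    · show ∑ u : V, (f (u, v) + g (u, v)) = 0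
      rw [Finset.sum_add_distrib, hf3 v, hg3 v]; ring
  zero_mem' := by
    refine ⟨fun u v => ?_, fun u v h => ?_, fun v => ?_⟩ <;> simp
  smul_mem' := by
    rintro c f ⟨hf1, hf2, hf3⟩
    refine ⟨fun u v => ?_, fun u v h => ?_, fun v => ?_⟩
    · show c * f (u, v) = -(c * f (v, u))
      rw [hf1 u v]; ring
    · show c * f (u, v) = 0
      rw [hf2 u v h]; ring
    · show ∑ u : V, c * f (u, v) = 0
      rw [← Finset.mul_sum, hf3 v]; ring

/-- The projected edge vector `P χ_(a,b)`, where `P` is the orthogonal projection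
onto the cycle space of `G`. -/
def projEdge (G : SimpleGraph V) (a b : V) : EuclideanSpace ℝ (V × V) :=
  (Submodule.orthogonalProjectionOnto (cycleSpace G) (edgeChi a b) : EuclideanSpace ℝ (V × V))

/-!
Gradients `(u, v) ↦ φ v - φ u` are orthogonal to every cycle, so `P χ_(a,b)` is the unique
cycle that differs from `χ_(a,b)` by a gradient on the edges. For `K_{p,q}` this cycle is
`(a', b') ↦ (δ_{a a'} - 1/p) (δ_{b b'} - 1/q)` on the edges oriented from `A` to `B`. As `P` is
a self-adjoint idempotent, `⟪P χ_e, P χ_e'⟫ = ⟪P χ_e, χ_e'⟫ = 2 (P χ_e) e'`, which yields every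
norm and inner product in the statement.
-/

section CycleSpace

variable {G : SimpleGraph V}

omit [DecidableEq V] in
theorem sum_gradient_mul_eq_zero_of_mem_cycleSpace {f : EuclideanSpace ℝ (V × V)}
    (hf : f ∈ cycleSpace G) (φ : V → ℝ) : ∑ x : V × V, (φ x.2 - φ x.1) * f x = 0 := by
  obtain ⟨hanti, -, hbd⟩ := hf
  have hin : ∀ v, ∑ u, φ v * f (u, v) = 0 := fun v => by rw [← Finset.mul_sum, hbd, mul_zero]
  have hout : ∀ u, ∑ v, φ u * f (u, v) = 0 := fun u => by
    simp_rw [hanti u, mul_neg, Finset.sum_neg_distrib, ← Finset.mul_sum, hbd, mul_zero, neg_zero]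
  simp_rw [Fintype.sum_prod_type, sub_mul, Finset.sum_sub_distrib, hout, Finset.sum_const_zero,
    sub_zero]
  rw [Finset.sum_comm]
  simp_rw [hin, Finset.sum_const_zero]

theorem projEdge_eq_of_sub_eq_gradient {a b : V} {f : EuclideanSpace ℝ (V × V)}
    (hf : f ∈ cycleSpace G) (φ : V → ℝ)
    (hφ : ∀ u v, G.Adj u v → edgeChi a b (u, v) - f (u, v) = φ v - φ u) :
    projEdge G a b = f := by
  rw [projEdge, ← Submodule.starProjection_apply]
  refine Submodule.eq_starProjection_of_mem_of_inner_eq_zero hf fun h hh => ?_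
  rw [← sum_gradient_mul_eq_zero_of_mem_cycleSpace hh φ]
  simp only [PiLp.inner_apply, RCLike.inner_apply, conj_trivial, PiLp.sub_apply]
  refine Finset.sum_congr rfl fun ⟨u, v⟩ _ => ?_
  by_cases huv : G.Adj u v
  · rw [hφ u v huv, mul_comm]
  · rw [hh.2.1 u v huv, zero_mul, mul_zero]

theorem inner_edgeChi_right (f : EuclideanSpace ℝ (V × V)) {a b : V} (hab : a ≠ b) :
    ⟪f, edgeChi a b⟫ = f (a, b) - f (b, a) := by
  simp only [PiLp.inner_apply, RCLike.inner_apply, conj_trivial, edgeChi]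
  rw [Fintype.sum_eq_add (a, b) (b, a) (by simp [hab])]
  · simp [hab.symm, sub_eq_add_neg]
  · intro x hx
    simp [hx.1, hx.2]

theorem inner_projEdge_projEdge (G : SimpleGraph V) (a b : V) {a' b' : V} (h : a' ≠ b') :
    ⟪projEdge G a b, projEdge G a' b'⟫ = 2 * projEdge G a b (a', b') := by
  have hmem : projEdge G a b ∈ cycleSpace G := Submodule.coe_mem _
  calc ⟪projEdge G a b, projEdge G a' b'⟫ = ⟪projEdge G a b, edgeChi a' b'⟫ := by
        rw [projEdge, projEdge, ← Submodule.coe_inner,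
          Submodule.inner_orthogonalProjectionOnto_eq_of_mem_left]
    _ = 2 * projEdge G a b (a', b') := by
        rw [inner_edgeChi_right _ h, hmem.1 b' a']
        ring

end CycleSpace

section CompleteBipartite

variable {α A B : Type*} [Fintype α] [DecidableEq α] [Fintype A] [Fintype B]

def centeredIndicator (a a' : α) : ℝ := (if a' = a then 1 else 0) - 1 / Fintype.card α

theorem sum_centeredIndicator (a : α) : ∑ a', centeredIndicator a a' = 0 := by
  have : (Fintype.card α : ℝ) ≠ 0 := Nat.cast_ne_zero.2 (Fintype.card_pos_iff.2 ⟨a⟩).ne'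
  simp [centeredIndicator, Finset.sum_sub_distrib, this]

def bipartiteChain (f : A → ℝ) (g : B → ℝ) : EuclideanSpace ℝ ((A ⊕ B) × (A ⊕ B)) :=
  WithLp.toLp 2 fun
    | (Sum.inl a, Sum.inr b) => f a * g b
    | (Sum.inr b, Sum.inl a) => -(f a * g b)
    | _ => 0

theorem bipartiteChain_mem_cycleSpace [DecidableEq A] [DecidableEq B] {f : A → ℝ} {g : B → ℝ}
    (hf : ∑ a, f a = 0) (hg : ∑ b, g b = 0) :
    bipartiteChain f g ∈ cycleSpace (completeBipartiteGraph A B) := by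
  refine ⟨?_, ?_, ?_⟩
  · rintro (a | b) (a' | b') <;> simp [bipartiteChain]
  · rintro (a | b) (a' | b') h <;> simp_all [bipartiteChain]
  · rintro (a | b) <;> simp [bipartiteChain, Fintype.sum_sum_type, ← Finset.sum_mul,
      ← Finset.mul_sum, hf, hg]

variable [DecidableEq A] [DecidableEq B]

theorem projEdge_completeBipartiteGraph (a : A) (b : B) :
    projEdge (completeBipartiteGraph A B) (Sum.inl a) (Sum.inr b)
      = bipartiteChain (centeredIndicator a) (centeredIndicator b) := by
  -- with `p = |A|`, `q = |B|`, the difference `χ_(a,b) - bipartiteChain ..` takes the value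
  -- `δ_{a a'} / q + δ_{b b'} / p - 1 / (p q)` on the edge `(a', b')`
  refine projEdge_eq_of_sub_eq_gradient
    (bipartiteChain_mem_cycleSpace (sum_centeredIndicator a) (sum_centeredIndicator b))
    (Sum.elim (fun a' => -(if a' = a then 1 else 0) / Fintype.card B)
      (fun b' => (if b' = b then 1 else 0) / Fintype.card A
        - 1 / (Fintype.card A * Fintype.card B))) ?_
  rintro (a' | b') (a'' | b'') h <;> simp at h
  · by_cases ha : a' = a <;> by_cases hb : b'' = b <;>
      simp [edgeChi, bipartiteChain, centeredIndicator, ha, hb] <;> ring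
  · by_cases ha : a'' = a <;> by_cases hb : b' = b <;>
      simp [edgeChi, bipartiteChain, centeredIndicator, ha, hb] <;> ring

theorem inner_projEdge_completeBipartiteGraph (a a' : A) (b b' : B) :
    ⟪projEdge (completeBipartiteGraph A B) (Sum.inl a) (Sum.inr b),
      projEdge (completeBipartiteGraph A B) (Sum.inl a') (Sum.inr b')⟫
      = 2 * (centeredIndicator a a' * centeredIndicator b b') := by
  rw [inner_projEdge_projEdge _ _ _ Sum.inl_ne_inr, projEdge_completeBipartiteGraph]
  rfl

end CompleteBipartite

/-- **Section 7: the crystal lattice of the complete bipartite graph `K_{p,q}`.** For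
`p, q ≥ 3`, every projected edge vector has squared norm `2(p−1)(q−1)/(pq)`, and the
normalized inner products of two distinct projected edge vectors `P χ_(a,b)`,
`P χ_(a',b')` (with `a, a'` in one part and `b, b'` in the other) are `−1/(q−1)`,
`−1/(p−1)` or `1/((p−1)(q−1))`, according to how the endpoints overlap. -/
theorem completeBipartite_proj_norm_and_inner
    {A B : Type*} [Fintype A] [Fintype B] [DecidableEq A] [DecidableEq B]
    (p q : ℕ) (hp : 3 ≤ p) (hq : 3 ≤ q)
    (hcardA : Fintype.card A = p) (hcardB : Fintype.card B = q)
    (G : SimpleGraph (A ⊕ B)) (hG : G = completeBipartiteGraph A B) :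
    (∀ (a : A) (b : B),
      ‖projEdge G (Sum.inl a) (Sum.inr b)‖ ^ 2
        = 2 * ((p : ℝ) - 1) * ((q : ℝ) - 1) / ((p : ℝ) * q)) ∧
    (∀ (a a' : A) (b b' : B), (a, b) ≠ (a', b') →
      (a = a' → b ≠ b' →
        ⟪projEdge G (Sum.inl a) (Sum.inr b), projEdge G (Sum.inl a') (Sum.inr b')⟫ /
          (‖projEdge G (Sum.inl a) (Sum.inr b)‖ * ‖projEdge G (Sum.inl a') (Sum.inr b')‖)
            = -(1 / ((q : ℝ) - 1))) ∧
      (b = b' → a ≠ a' →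
        ⟪projEdge G (Sum.inl a) (Sum.inr b), projEdge G (Sum.inl a') (Sum.inr b')⟫ /
          (‖projEdge G (Sum.inl a) (Sum.inr b)‖ * ‖projEdge G (Sum.inl a') (Sum.inr b')‖)
            = -(1 / ((p : ℝ) - 1))) ∧
      (a ≠ a' → b ≠ b' →
        ⟪projEdge G (Sum.inl a) (Sum.inr b), projEdge G (Sum.inl a') (Sum.inr b')⟫ /
          (‖projEdge G (Sum.inl a) (Sum.inr b)‖ * ‖projEdge G (Sum.inl a') (Sum.inr b')‖)
            = 1 / (((p : ℝ) - 1) * ((q : ℝ) - 1)))) := by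
  subst hG
  have hp1 : (p : ℝ) - 1 ≠ 0 := sub_ne_zero.2 (by exact_mod_cast (by omega : p ≠ 1))
  have hq1 : (q : ℝ) - 1 ≠ 0 := sub_ne_zero.2 (by exact_mod_cast (by omega : q ≠ 1))
  have hnorm_sq (a : A) (b : B) :
      ‖projEdge (completeBipartiteGraph A B) (Sum.inl a) (Sum.inr b)‖ ^ 2 = 2 * ((p - 1) * (q - 1)) / (p * q) := by
    rw [← real_inner_self_eq_norm_sq, inner_projEdge_completeBipartiteGraph]
    simp only [centeredIndicator, if_pos, hcardA, hcardB]
    field_simp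
  refine ⟨fun a b => by rw [hnorm_sq]; ring, fun a a' b b' _ => ?_⟩
  have hnorm_mul : ‖projEdge (completeBipartiteGraph A B) (Sum.inl a) (Sum.inr b)‖ *
      ‖projEdge (completeBipartiteGraph A B) (Sum.inl a') (Sum.inr b')‖
        = 2 * ((p - 1) * (q - 1)) / (p * q) := by
    rw [← Real.sqrt_sq (norm_nonneg _), hnorm_sq, ← Real.sqrt_sq (norm_nonneg (projEdge _ _ _)),
      hnorm_sq, Real.mul_self_sqrt (hnorm_sq a b ▸ sq_nonneg _)]
  rw [inner_projEdge_completeBipartiteGraph, hnorm_mul]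
  refine ⟨fun ha hb => ?_, fun hb ha => ?_, fun ha hb => ?_⟩
  · subst ha
    simp only [centeredIndicator, if_pos, if_neg (Ne.symm hb), hcardA, hcardB]
    field_simp
    ring
  · subst hb
    simp only [centeredIndicator, if_pos, if_neg (Ne.symm ha), hcardA, hcardB]
    field_simp
    ring
  · simp only [centeredIndicator, if_neg (Ne.symm ha), if_neg (Ne.symm hb), hcardA, hcardB]
    field_simp
    ring

end
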